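/- Let μ, κ > 0 and let h : ℝ → [0,∞) satisfy h(z) ≥ h(0) > 0 for every z ∈ ℝ. Then there exists a constant c > 0 such that for every z ∈ [0,1] and all symmetric 2×2 real matrices E₁, E₂ one has (∂_E W(z,E₁) − ∂_E W(z,E₂)) : (E₁ − E₂) ≥ c |E₁ − E₂|². -/

import Mathlib

/-!
The deviatoric map `E ↦ E_d` is linear and `E_d` is Frobenius-orthogonal to the identity, so with
`D = E₁ - E₂` the stress difference tested against `D` equals
`2h(z)μ|D_d|² + κ (g(tr E₁) - g(tr E₂)) tr D`, where `g(t) = h(z) t₊ - t₋` is piecewise linear with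
slopes `h(z)` and `1`, hence strongly monotone with constant `min(h(z), 1) ≥ min(h(0), 1)`.
Since `|D|² = |D_d|² + (tr D)²/2`, the constant `c = min(2μh(0), 2κ min(h(0), 1))` works.
-/

open Matrix

/-- Volumetric part of a 2×2 matrix: `((tr F)/2) • I`. -/
noncomputable def Mvol (F : Matrix (Fin 2) (Fin 2) ℝ) : Matrix (Fin 2) (Fin 2) ℝ :=
  (Matrix.trace F / 2) • (1 : Matrix (Fin 2) (Fin 2) ℝ)

/-- Deviatoric part of a 2×2 matrix: `F - F_v`. -/
noncomputable def Mdev (F : Matrix (Fin 2) (Fin 2) ℝ) : Matrix (Fin 2) (Fin 2) ℝ :=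
  F - Mvol F

/-- Tensile volumetric part: `((tr F)_plus / 2) • I`. -/
noncomputable def MvolP (F : Matrix (Fin 2) (Fin 2) ℝ) : Matrix (Fin 2) (Fin 2) ℝ :=
  (max (Matrix.trace F) 0 / 2) • (1 : Matrix (Fin 2) (Fin 2) ℝ)

/-- Compressive volumetric part: `((tr F)_minus / 2) • I`. -/
noncomputable def MvolM (F : Matrix (Fin 2) (Fin 2) ℝ) : Matrix (Fin 2) (Fin 2) ℝ :=
  (max (-(Matrix.trace F)) 0 / 2) • (1 : Matrix (Fin 2) (Fin 2) ℝ)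

/-- Frobenius inner product `A : B := tr(Aᵀ B)`. -/
noncomputable def mInner (A B : Matrix (Fin 2) (Fin 2) ℝ) : ℝ := Matrix.trace (Aᵀ * B)

/-- Frobenius norm. -/
noncomputable def fnorm (A : Matrix (Fin 2) (Fin 2) ℝ) : ℝ := Real.sqrt (mInner A A)

/-- Elastic energy density with tension–compression splitting:
`W(z,E) = h(z)(μ|E_d|² + κ|E_v⁺|²) + κ|E_v⁻|²`. -/
noncomputable def W (mu kappa : ℝ) (h : ℝ → ℝ) (z : ℝ)
    (E : Matrix (Fin 2) (Fin 2) ℝ) : ℝ :=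
  h z * (mu * fnorm (Mdev E) ^ 2 + kappa * fnorm (MvolP E) ^ 2) +
    kappa * fnorm (MvolM E) ^ 2

/-- The stress `∂_E W(z,E) = 2h(z)(μ E_d + κ E_v⁺) - 2κ E_v⁻`. -/
noncomputable def dW (mu kappa : ℝ) (h : ℝ → ℝ) (z : ℝ)
    (E : Matrix (Fin 2) (Fin 2) ℝ) : Matrix (Fin 2) (Fin 2) ℝ :=
  (2 * h z) • (mu • Mdev E + kappa • MvolP E) - (2 * kappa) • MvolM E

/-- The partial derivative `∂_z W(z,E) = h'(z)(μ|E_d|² + κ|E_v⁺|²)`. -/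
noncomputable def dzW (mu kappa : ℝ) (h : ℝ → ℝ) (z : ℝ)
    (E : Matrix (Fin 2) (Fin 2) ℝ) : ℝ :=
  deriv h z * (mu * fnorm (Mdev E) ^ 2 + kappa * fnorm (MvolP E) ^ 2)

def volResponse (H t : ℝ) : ℝ := H * max t 0 - max (-t) 0

theorem volResponse_strongMono (H s t : ℝ) :
    min H 1 * (s - t) ^ 2 ≤ (volResponse H s - volResponse H t) * (s - t) := by
  have hH : 0 ≤ H - min H 1 := sub_nonneg.2 (min_le_left H 1)
  have h1 : 0 ≤ 1 - min H 1 := sub_nonneg.2 (min_le_right H 1)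
  unfold volResponse
  rcases le_total s 0 with hs | hs <;> rcases le_total t 0 with ht | ht <;>
    simp only [max_eq_left, max_eq_right, hs, ht, neg_nonneg, neg_nonpos]
  · nlinarith [mul_nonneg h1 (sq_nonneg (s - t))]
  · nlinarith [mul_nonneg hH (mul_nonneg ht (by linarith : 0 ≤ t - s)),
      mul_nonneg h1 (mul_nonneg (neg_nonneg.2 hs) (by linarith : 0 ≤ t - s))]
  · nlinarith [mul_nonneg hH (mul_nonneg hs (by linarith : 0 ≤ s - t)),
      mul_nonneg h1 (mul_nonneg (neg_nonneg.2 ht) (by linarith : 0 ≤ s - t))]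
  · nlinarith [mul_nonneg hH (sq_nonneg (s - t))]

section Frobenius

variable (A B C : Matrix (Fin 2) (Fin 2) ℝ)

theorem mInner_add_left : mInner (A + B) C = mInner A C + mInner B C := by
  simp only [mInner, transpose_add, Matrix.add_mul, trace_add]

theorem mInner_smul_left (r : ℝ) : mInner (r • A) B = r * mInner A B := by
  simp only [mInner, transpose_smul, Matrix.smul_mul, trace_smul, smul_eq_mul]

theorem mInner_add_right : mInner A (B + C) = mInner A B + mInner A C := by
  simp only [mInner, Matrix.mul_add, trace_add]

theorem mInner_smul_right (r : ℝ) : mInner A (r • B) = r * mInner A B := by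
  simp only [mInner, Matrix.mul_smul, trace_smul, smul_eq_mul]

theorem mInner_comm : mInner A B = mInner B A := by
  rw [mInner, ← trace_transpose, transpose_mul, transpose_transpose, mInner]

theorem mInner_one_left : mInner 1 A = trace A := by
  simp [mInner]

theorem mInner_self_nonneg : 0 ≤ mInner A A := by
  simpa [mInner, conjTranspose_eq_transpose_of_trivial] using
    (posSemidef_conjTranspose_mul_self A).trace_nonneg

theorem fnorm_sq : fnorm A ^ 2 = mInner A A :=
  Real.sq_sqrt (mInner_self_nonneg A)

theorem Mdev_sub : Mdev (A - B) = Mdev A - Mdev B := by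
  simp only [Mdev, Mvol, trace_sub, sub_div, sub_smul]
  abel

theorem trace_Mdev : trace (Mdev A) = 0 := by
  simp [Mdev, Mvol, trace_one]

theorem mInner_Mdev_Mvol : mInner (Mdev A) (Mvol A) = 0 := by
  rw [mInner_comm, Mvol, mInner_smul_left, mInner_one_left, trace_Mdev, mul_zero]

theorem Mdev_add_Mvol : Mdev A + Mvol A = A :=
  sub_add_cancel A (Mvol A)

theorem mInner_Mdev_self : mInner (Mdev A) A = fnorm (Mdev A) ^ 2 := by
  calc mInner (Mdev A) A = mInner (Mdev A) (Mdev A + Mvol A) := by rw [Mdev_add_Mvol]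
    _ = fnorm (Mdev A) ^ 2 := by rw [mInner_add_right, mInner_Mdev_Mvol, add_zero, fnorm_sq]

theorem fnorm_sq_eq_fnorm_Mdev_sq_add : fnorm A ^ 2 = fnorm (Mdev A) ^ 2 + trace A ^ 2 / 2 := by
  have hvol : mInner (Mvol A) (Mvol A) = trace A ^ 2 / 2 := by
    rw [Mvol, mInner_smul_left, mInner_smul_right, mInner_one_left, trace_one]
    norm_num
    ring
  calc fnorm A ^ 2 = mInner (Mdev A + Mvol A) (Mdev A + Mvol A) := by rw [Mdev_add_Mvol, fnorm_sq]
    _ = mInner (Mdev A) (Mdev A) + mInner (Mvol A) (Mvol A) := by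
      rw [mInner_add_left, mInner_add_right, mInner_add_right, mInner_comm (Mvol A),
        mInner_Mdev_Mvol]
      ring
    _ = fnorm (Mdev A) ^ 2 + trace A ^ 2 / 2 := by rw [fnorm_sq, hvol]

end Frobenius

theorem dW_eq (mu kappa : ℝ) (h : ℝ → ℝ) (z : ℝ) (A : Matrix (Fin 2) (Fin 2) ℝ) :
    dW mu kappa h z A = (2 * h z * mu) • Mdev A + (kappa * volResponse (h z) (trace A)) • 1 := by
  simp only [dW, MvolP, MvolM, volResponse, smul_add, smul_smul]
  rw [add_sub_assoc, ← sub_smul]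
  congr 2; ring

theorem mInner_dW_sub_dW (mu kappa : ℝ) (h : ℝ → ℝ) (z : ℝ) (A B : Matrix (Fin 2) (Fin 2) ℝ) :
    mInner (dW mu kappa h z A - dW mu kappa h z B) (A - B) =
      2 * h z * mu * fnorm (Mdev (A - B)) ^ 2 +
        kappa * ((volResponse (h z) (trace A) - volResponse (h z) (trace B)) * trace (A - B)) := by
  rw [dW_eq, dW_eq, add_sub_add_comm, ← smul_sub, ← sub_smul, ← Mdev_sub, mInner_add_left,
    mInner_smul_left, mInner_smul_left, mInner_Mdev_self, mInner_one_left]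
  ring

/-- strong monotonicity of the stress: there is `c > 0` with
`(∂_E W(z,E₁) - ∂_E W(z,E₂)) : (E₁ - E₂) ≥ c|E₁ - E₂|²` for all `z ∈ [0,1]`
and symmetric `E₁`, `E₂`. -/
theorem stress_strongly_monotone (mu kappa : ℝ) (hmu : 0 < mu) (hkappa : 0 < kappa)
    (h : ℝ → ℝ) (hh : ∀ z, h 0 ≤ h z) (hh0 : 0 < h 0) :
    ∃ c > 0, ∀ z ∈ Set.Icc (0 : ℝ) 1, ∀ E₁ E₂ : Matrix (Fin 2) (Fin 2) ℝ,
      E₁ᵀ = E₁ → E₂ᵀ = E₂ →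
      mInner (dW mu kappa h z E₁ - dW mu kappa h z E₂) (E₁ - E₂) ≥
        c * fnorm (E₁ - E₂) ^ 2 := by
  set c := min (2 * mu * h 0) (2 * kappa * min (h 0) 1)
  refine ⟨c, by positivity, fun z _ E₁ E₂ _ _ => ?_⟩
  rw [mInner_dW_sub_dW, fnorm_sq_eq_fnorm_Mdev_sq_add (E₁ - E₂), trace_sub]
  have hdev : c * fnorm (Mdev (E₁ - E₂)) ^ 2 ≤ 2 * h z * mu * fnorm (Mdev (E₁ - E₂)) ^ 2 := by
    refine mul_le_mul_of_nonneg_right ((min_le_left _ _).trans ?_) (sq_nonneg _)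
    nlinarith [hh z]
  have hvol : c * ((trace E₁ - trace E₂) ^ 2 / 2) ≤
      kappa * ((volResponse (h z) (trace E₁) - volResponse (h z) (trace E₂)) *
        (trace E₁ - trace E₂)) := by
    calc c * ((trace E₁ - trace E₂) ^ 2 / 2)
        ≤ kappa * (min (h 0) 1 * (trace E₁ - trace E₂) ^ 2) := by
          nlinarith [min_le_right (2 * mu * h 0) (2 * kappa * min (h 0) 1),
            sq_nonneg (trace E₁ - trace E₂)]
      _ ≤ kappa * (min (h z) 1 * (trace E₁ - trace E₂) ^ 2) := by gcongr; exact hh z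
      _ ≤ _ := mul_le_mul_of_nonneg_left (volResponse_strongMono _ _ _) hkappa.le
  linarith
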